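/- arXiv:2112.13339 — 2 statements merged into one kernel-verified Lean document; each statement's English description precedes it below -/
import Mathlib

section
/- Let I ⊆ ℝ be an open interval, β : ℝ → ℝ twice differentiable on I, and ν : ℝ → ℝ differentiable on I with 0 < ν(t) < 1 and ν'(t) = (1 − ν(t))·β(t) for t ∈ I. Fix x₀ ∈ ℝ and define the single-point score S(x,t) = (x − √(1 − ν(t))·x₀)/√(ν(t)), the probability-flow drift f♭(x,t) = −(β(t)/2)·x + (β(t)/(2√(ν(t))))·S(x,t), and the operator (L♭ φ)(x,t) = −∂φ/∂t (x,t) − f♭(x,t)·∂φ/∂x (x,t). Then for all x ∈ ℝ, t ∈ I and h ∈ ℝ, x + h·(−f♭)(x,t) + (h²/2)·(L♭(−f♭))(x,t) + (h³/6)·(L♭(L♭(−f♭)))(x,t) = ρ(t,h)·x + μ(t,h)·S(x,t)/√(ν(t)), where ρ(t,h) = 1 + β(t)h/2 + (h²/4)·(β(t)²/2 − β'(t)) + (h³/4)·(β(t)³/12 − β(t)β'(t)/2 + β''(t)/3) and μ(t,h) = −β(t)h/2 + (h²/4)·(β'(t) − β(t)²/(2ν(t))) + (h³/4)·( β(t)³·(−ν(t)²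 + 3ν(t) − 3)/(12ν(t)²) + β(t)β'(t)/(2ν(t)) − β''(t)/3 ). -/
open Real

/-! The mean `m t = √(1 - ν t) * x₀` satisfies `m' = -(β / 2) * m`, and `√ν * S = x - m`. In the
basis `x, x - m t` the velocity `-f♭` is therefore affine with coefficients `β / 2` and
`-β / (2 ν)`, and `L♭` sends an affine field `P t * x + Q t * (x - m t)` to the affine field with
coefficients `a P - P'` and `a Q + b (P + Q) - Q'`, where `a, b` are those of `-f♭`: the terms in
`m` cancel because `m' = -a m`. Two applications give the Taylor terms of order two and three, and
comparing coefficients of `x` and of `x - m = ν * (S / √ν)` leaves an identity of rational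
functions in `β, β', β'', ν`. -/

noncomputable def flowDerivative (f φ : ℝ → ℝ → ℝ) (x t : ℝ) : ℝ :=
  -(deriv (fun τ => φ x τ) t) - f x t * deriv (fun ξ => φ ξ t) x

def IsAffineField (I : Set ℝ) (m P Q : ℝ → ℝ) (φ : ℝ → ℝ → ℝ) : Prop :=
  ∀ x, ∀ t ∈ I, φ x t = P t * x + Q t * (x - m t)

namespace IsAffineField

variable {I : Set ℝ} {m P Q : ℝ → ℝ} {φ : ℝ → ℝ → ℝ}

theorem congr {P₂ Q₂ : ℝ → ℝ} (hφ : IsAffineField I m P Q φ)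
    (hP : ∀ t ∈ I, P t = P₂ t) (hQ : ∀ t ∈ I, Q t = Q₂ t) : IsAffineField I m P₂ Q₂ φ := by
  intro x t ht
  rw [hφ x t ht, hP t ht, hQ t ht]

theorem flowDerivative (hφ : IsAffineField I m P Q φ) (hI : IsOpen I) {f : ℝ → ℝ → ℝ}
    {a b P' Q' : ℝ → ℝ} (hf : IsAffineField I m a b fun x t => -f x t)
    (hm : ∀ t ∈ I, HasDerivAt m (-(a t * m t)) t)
    (hP : ∀ t ∈ I, HasDerivAt P (P' t) t) (hQ : ∀ t ∈ I, HasDerivAt Q (Q' t) t) :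
    IsAffineField I m (fun t => a t * P t - P' t)
      (fun t => a t * Q t + b t * (P t + Q t) - Q' t) (flowDerivative f φ) := by
  intro x t ht
  have h_time :
      HasDerivAt (fun τ => φ x τ) (P' t * x + (Q' t * (x - m t) + Q t * (a t * m t))) t := by
    have h := ((hP t ht).mul_const x).add ((hQ t ht).mul ((hm t ht).const_sub x))
    refine (h.congr_of_eventuallyEq ?_).congr_deriv (by ring)
    filter_upwards [hI.mem_nhds ht] with τ hτ using hφ x τ hτ
  have h_space : HasDerivAt (fun ξ => φ ξ t) (P t + Q t) x := by
    rw [show (fun ξ => φ ξ t) = fun ξ => P t * ξ + Q t * (ξ - m t) from funext fun ξ => hφ ξ t ht]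
    exact (((hasDerivAt_id' x).const_mul (P t)).add
      (((hasDerivAt_id' x).sub_const (m t)).const_mul (Q t))).congr_deriv (by ring)
  have hfx : f x t = -(a t * x + b t * (x - m t)) := by rw [← hf x t ht, neg_neg]
  rw [_root_.flowDerivative, h_time.deriv, h_space.deriv, hfx]
  ring

end IsAffineField

section VarianceSchedule

variable {β ν : ℝ → ℝ} {t : ℝ}

theorem hasDerivAt_sqrt_one_sub_mul (hν : HasDerivAt ν ((1 - ν t) * β t) t) (hν1 : ν t < 1)
    (x₀ : ℝ) : HasDerivAt (fun τ => √(1 - ν τ) * x₀) (-(β t / 2 * (√(1 - ν t) * x₀))) t := by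
  have hpos : 0 < 1 - ν t := by linarith
  refine ((hν.const_sub 1).sqrt hpos.ne').mul_const x₀ |>.congr_deriv ?_
  field_simp
  linear_combination β t * x₀ * sq_sqrt hpos.le

theorem hasDerivAt_neg_div_two_mul {β₁ : ℝ} (hβ : HasDerivAt β β₁ t)
    (hν : HasDerivAt ν ((1 - ν t) * β t) t) (hν0 : ν t ≠ 0) :
    HasDerivAt (fun τ => -(β τ / (2 * ν τ)))
      (β t ^ 2 * (1 - ν t) / (2 * ν t ^ 2) - β₁ / (2 * ν t)) t := by
  refine (hβ.div (hν.const_mul 2) (by simpa using hν0)).neg.congr_deriv ?_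
  field_simp
  ring

theorem hasDerivAt_div_two_mul_sub_sq_div {γ : ℝ → ℝ} {β₁ γ₁ : ℝ} (hβ : HasDerivAt β β₁ t)
    (hγ : HasDerivAt γ γ₁ t) (hν : HasDerivAt ν ((1 - ν t) * β t) t) (hν0 : ν t ≠ 0) :
    HasDerivAt (fun τ => γ τ / (2 * ν τ) - β τ ^ 2 / (4 * ν τ ^ 2))
      (γ₁ / (2 * ν t) - β t * γ t * (1 - ν t) / (2 * ν t ^ 2) - β t * β₁ / (2 * ν t ^ 2)
        + β t ^ 3 * (1 - ν t) / (2 * ν t ^ 3)) t := by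
  refine ((hγ.div (hν.const_mul 2) (by simpa using hν0)).sub
    ((hβ.pow 2).div ((hν.pow 2).const_mul 4) (by simpa using hν0))).congr_deriv ?_
  simp only [Pi.pow_apply]
  field_simp
  ring

end VarianceSchedule

theorem quasi_taylor_third_order_update
    (I : Set ℝ) (hI : IsOpen I)
    (β ν : ℝ → ℝ)
    (hβ : ∀ t ∈ I, DifferentiableAt ℝ β t)
    (hβ' : ∀ t ∈ I, DifferentiableAt ℝ (deriv β) t)
    (hν01 : ∀ t ∈ I, 0 < ν t ∧ ν t < 1)
    (hν : ∀ t ∈ I, HasDerivAt ν ((1 - ν t) * β t) t)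
    (x₀ : ℝ)
    (S : ℝ → ℝ → ℝ)
    (hS : S = fun x t => (x - Real.sqrt (1 - ν t) * x₀) / Real.sqrt (ν t))
    (f : ℝ → ℝ → ℝ)
    (hf : f = fun x t => -(β t / 2) * x + (β t / (2 * Real.sqrt (ν t))) * S x t)
    (L : (ℝ → ℝ → ℝ) → ℝ → ℝ → ℝ)
    (hL : L = fun φ x t =>
      -(deriv (fun τ => φ x τ) t) - f x t * deriv (fun ξ => φ ξ t) x)
    (ρ μ : ℝ → ℝ → ℝ)
    (hρ : ρ = fun t h => 1 + β t * h / 2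
      + (h ^ 2 / 4) * (β t ^ 2 / 2 - deriv β t)
      + (h ^ 3 / 4) * (β t ^ 3 / 12 - β t * deriv β t / 2 + deriv (deriv β) t / 3))
    (hμ : μ = fun t h => -(β t * h / 2)
      + (h ^ 2 / 4) * (deriv β t - β t ^ 2 / (2 * ν t))
      + (h ^ 3 / 4) * (β t ^ 3 * (-(ν t ^ 2) + 3 * ν t - 3) / (12 * ν t ^ 2)
          + β t * deriv β t / (2 * ν t) - deriv (deriv β) t / 3)) :
    ∀ x : ℝ, ∀ t ∈ I, ∀ h : ℝ,
      x + h * (-f x t) + (h ^ 2 / 2) * L (fun x t => -f x t) x t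
          + (h ^ 3 / 6) * L (L (fun x t => -f x t)) x t
        = ρ t h * x + μ t h * S x t / Real.sqrt (ν t) := by
  intro x t ht h
  have hν0 : ∀ τ ∈ I, ν τ ≠ 0 := fun τ hτ => (hν01 τ hτ).1.ne'
  have hβd : ∀ τ ∈ I, HasDerivAt β (deriv β τ) τ := fun τ hτ => (hβ τ hτ).hasDerivAt
  have hβdd : ∀ τ ∈ I, HasDerivAt (deriv β) (deriv (deriv β) τ) τ :=
    fun τ hτ => (hβ' τ hτ).hasDerivAt
  have hm := fun τ hτ => hasDerivAt_sqrt_one_sub_mul (hν τ hτ) (hν01 τ hτ).2 x₀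
  have hSν : ∀ x, ∀ τ ∈ I, S x τ / √(ν τ) = (x - √(1 - ν τ) * x₀) / ν τ := by
    intro x τ hτ
    rw [hS, div_div, mul_self_sqrt (hν01 τ hτ).1.le]
  have hv : IsAffineField I (fun τ => √(1 - ν τ) * x₀) (fun τ => β τ / 2)
      (fun τ => -(β τ / (2 * ν τ))) fun x t => -f x t := by
    intro x τ hτ
    simp only [hf]
    rw [show β τ / (2 * √(ν τ)) * S x τ = β τ / 2 * (S x τ / √(ν τ)) by ring, hSν x τ hτ]
    field_simp [hν0 τ hτ]
    ring
  have h1 : IsAffineField I (fun τ => √(1 - ν τ) * x₀) (fun τ => β τ ^ 2 / 4 - deriv β τ / 2)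
      (fun τ => deriv β τ / (2 * ν τ) - β τ ^ 2 / (4 * ν τ ^ 2))
      (flowDerivative f fun x t => -f x t) :=
    (hv.flowDerivative hI hv hm (fun τ hτ => (hβd τ hτ).div_const 2)
      (fun τ hτ => hasDerivAt_neg_div_two_mul (hβd τ hτ) (hν τ hτ) (hν0 τ hτ))).congr
      (fun τ _ => by ring) (fun τ hτ => by field_simp [hν0 τ hτ]; ring)
  have h2 := h1.flowDerivative hI hv hm
    (P' := fun τ => β τ * deriv β τ / 2 - deriv (deriv β) τ / 2)
    (fun τ hτ => ((((hβd τ hτ).pow 2).div_const 4).sub ((hβdd τ hτ).div_const 2)).congr_deriv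
      (by ring))
    (fun τ hτ => hasDerivAt_div_two_mul_sub_sq_div (hβd τ hτ) (hβdd τ hτ) (hν τ hτ) (hν0 τ hτ))
  have hL' : L = flowDerivative f := hL
  rw [hL', h2 x t ht, h1 x t ht, show -f x t = _ from hv x t ht, mul_div_assoc, hSν x t ht,
    hρ, hμ]
  field_simp [hν0 t ht]
  ring
end

section
/- Let I ⊆ ℝ be an open interval, β : ℝ → ℝ twice differentiable on I, and ν : ℝ → ℝ differentiable on I with 0 < ν(t) < 1 and ν'(t) = (1 − ν(t))·β(t) for t ∈ I. Fix x₀ ∈ ℝ and define the single-point score S(x,t) = (x − √(1 − ν(t))·x₀)/√(ν(t)), the reverse-SDE drift f♯(x,t) = −(β(t)/2)·x + (β(t)/√(ν(t)))·S(x,t), and the operator (L♯ φ)(x,t) = −∂φ/∂t (x,t) − f♯(x,t)·∂φ/∂x (x,t) + (β(t)/2)·∂²φ/∂x² (x,t). Then for all x ∈ ℝ and t ∈ I, (L♯(L♯(−f♯)))(x,t) = ( β(t)³/8 − 3β(t)β'(t)/4 + β''(t)/2 )·x − ( (β(t)³ + 4β''(t))/(4√(ν(t))) )·S(x,t). -/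
/-!
Write `w = S / √ν = (x - √(1 - ν) x₀) / ν`. On functions `c₁(t) x + c₂(t) w`, which are affine in
`x`, the second-order part of `L♯` vanishes and `L♯(c φ) = -c' φ + c L♯φ`; moreover `L♯ x = (β/2) x - β w`
and `L♯ w = -(β/2) w` (using `ν' = (1 - ν) β`). Hence `L♯` acts on the coefficients by
`(c₁, c₂) ↦ (β c₁ / 2 - c₁', -c₂' - β c₁ - β c₂ / 2)`. Starting from `-f♯ = (β/2) x - β w`, one step
gives `(β²/4 - β'/2, β')` and a second step gives `(β³/8 - 3ββ'/4 + β''/2, -(β³/4 + β''))`.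
-/

open Filter Topology

noncomputable section

def reverseGenerator (β : ℝ → ℝ) (f φ : ℝ → ℝ → ℝ) (x t : ℝ) : ℝ :=
  -(deriv (fun τ => φ x τ) t) - f x t * deriv (fun ξ => φ ξ t) x
    + (β t / 2) * deriv (deriv (fun ξ => φ ξ t)) x

/-- Minus the `x`-derivative of the log-density of `𝒩(√(1 - ν t) x₀, ν t)`; the score `S` is
`√ν · gaussScore`. -/
def gaussScore (ν : ℝ → ℝ) (x₀ x t : ℝ) : ℝ := (x - √(1 - ν t) * x₀) / ν t

end

theorem reverseGenerator_eq_of_affine {β p q : ℝ → ℝ} {f φ : ℝ → ℝ → ℝ} {p' q' t : ℝ}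
    (hφ : ∀ᶠ τ in 𝓝 t, ∀ ξ, φ ξ τ = p τ * ξ + q τ)
    (hp : HasDerivAt p p' t) (hq : HasDerivAt q q' t) (x : ℝ) :
    reverseGenerator β f φ x t = -(p' * x + q') - f x t * p t := by
  have hslice : (fun ξ => φ ξ t) = fun ξ => p t * ξ + q t := funext hφ.self_of_nhds
  have hspace : deriv (fun ξ => φ ξ t) = fun _ => p t := by
    rw [hslice]
    funext y
    simp
  have htime : HasDerivAt (fun τ => φ x τ) (p' * x + q') t :=
    ((hp.mul_const x).add hq).congr_of_eventuallyEq (hφ.mono fun τ h => h x)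
  simp [reverseGenerator, htime.deriv, hspace]

theorem hasDerivAt_sqrt_one_sub {ν β : ℝ → ℝ} {t : ℝ} (hν1 : ν t < 1)
    (hν : HasDerivAt ν ((1 - ν t) * β t) t) :
    HasDerivAt (fun τ => √(1 - ν τ)) (-(β t * √(1 - ν t)) / 2) t := by
  have hpos : 0 < 1 - ν t := sub_pos.mpr hν1
  refine ((hν.const_sub 1).sqrt hpos.ne').congr_deriv ?_
  have hsq := Real.mul_self_sqrt hpos.le
  have hne := (Real.sqrt_pos.mpr hpos).ne'
  field_simp
  linear_combination β t * hsq

theorem div_sqrt_eq_sqrt_mul_gaussScore {ν : ℝ → ℝ} {t : ℝ} (hν0 : 0 < ν t) (x₀ x : ℝ) :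
    (x - √(1 - ν t) * x₀) / √(ν t) = √(ν t) * gaussScore ν x₀ x t := by
  have hne := (Real.sqrt_pos.mpr hν0).ne'
  have hsq := Real.mul_self_sqrt hν0.le
  rw [gaussScore]
  field_simp
  rw [sq, hsq, mul_comm]

theorem reverseGenerator_eq_of_linComb_gaussScore {ν β c₁ c₂ : ℝ → ℝ} {f φ : ℝ → ℝ → ℝ}
    {x₀ t c₁' c₂' : ℝ} (hν0 : 0 < ν t) (hν1 : ν t < 1)
    (hν : HasDerivAt ν ((1 - ν t) * β t) t)
    (hφ : ∀ᶠ τ in 𝓝 t, ∀ ξ, φ ξ τ = c₁ τ * ξ + c₂ τ * gaussScore ν x₀ ξ τ)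
    (hc₁ : HasDerivAt c₁ c₁' t) (hc₂ : HasDerivAt c₂ c₂' t) {x : ℝ}
    (hf : f x t = -(β t / 2) * x + β t * gaussScore ν x₀ x t) :
    reverseGenerator β f φ x t = (β t / 2 * c₁ t - c₁') * x
      - (c₂' + β t * c₁ t + β t / 2 * c₂ t) * gaussScore ν x₀ x t := by
  have hp := hc₁.add (hc₂.div hν hν0.ne')
  have hq := (((hc₂.mul (hasDerivAt_sqrt_one_sub hν1 hν)).div hν hν0.ne').const_mul x₀).neg
  have hφ' : ∀ᶠ τ in 𝓝 t, ∀ ξ, φ ξ τ = (c₁ τ + c₂ τ / ν τ) * ξ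
      + -(x₀ * (c₂ τ * √(1 - ν τ) / ν τ)) := hφ.mono fun τ h ξ => by
    rw [h ξ, gaussScore]; ring
  rw [reverseGenerator_eq_of_affine hφ' hp hq, hf, gaussScore]
  simp only [Pi.mul_apply]
  field_simp
  ring

theorem ideal_derivative_L_sharp_sq_of_drift
    (I : Set ℝ) (hI : IsOpen I)
    (β ν : ℝ → ℝ)
    (hβ : ∀ t ∈ I, DifferentiableAt ℝ β t)
    (hβ' : ∀ t ∈ I, DifferentiableAt ℝ (deriv β) t)
    (hν01 : ∀ t ∈ I, 0 < ν t ∧ ν t < 1)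
    (hν : ∀ t ∈ I, HasDerivAt ν ((1 - ν t) * β t) t)
    (x₀ : ℝ)
    (S : ℝ → ℝ → ℝ)
    (hS : S = fun x t => (x - Real.sqrt (1 - ν t) * x₀) / Real.sqrt (ν t))
    (f : ℝ → ℝ → ℝ)
    (hf : f = fun x t => -(β t / 2) * x + (β t / Real.sqrt (ν t)) * S x t)
    (L : (ℝ → ℝ → ℝ) → ℝ → ℝ → ℝ)
    (hL : L = fun φ x t =>
      -(deriv (fun τ => φ x τ) t) - f x t * deriv (fun ξ => φ ξ t) x
        + (β t / 2) * deriv (deriv (fun ξ => φ ξ t)) x) :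
    ∀ x : ℝ, ∀ t ∈ I,
      L (L (fun x t => -f x t)) x t
        = (β t ^ 3 / 8 - 3 * β t * deriv β t / 4 + deriv (deriv β) t / 2) * x
          - ((β t ^ 3 + 4 * deriv (deriv β) t) / (4 * Real.sqrt (ν t))) * S x t := by
  have hS' : ∀ τ ∈ I, ∀ ξ, S ξ τ = √(ν τ) * gaussScore ν x₀ ξ τ := fun τ hτ ξ => by
    subst hS; exact div_sqrt_eq_sqrt_mul_gaussScore (hν01 τ hτ).1 x₀ ξ
  have hf' : ∀ τ ∈ I, ∀ ξ, f ξ τ = -(β τ / 2) * ξ + β τ * gaussScore ν x₀ ξ τ :=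
    fun τ hτ ξ => by
      have hne := (Real.sqrt_pos.mpr (hν01 τ hτ).1).ne'
      simp only [hf, hS' τ hτ]
      rw [← mul_assoc, div_mul_cancel₀ _ hne]
  have hLf : ∀ τ ∈ I, ∀ ξ, reverseGenerator β f (fun x t => -f x t) ξ τ
      = (β τ ^ 2 / 4 - deriv β τ / 2) * ξ + deriv β τ * gaussScore ν x₀ ξ τ := by
    intro τ hτ ξ
    have hφ : ∀ᶠ σ in 𝓝 τ, ∀ ζ, -f ζ σ = β σ / 2 * ζ + (-β σ) * gaussScore ν x₀ ζ σ :=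
      (hI.eventually_mem hτ).mono fun σ hσ ζ => by rw [hf' σ hσ]; ring
    rw [reverseGenerator_eq_of_linComb_gaussScore (hν01 τ hτ).1 (hν01 τ hτ).2 (hν τ hτ) hφ
      ((hβ τ hτ).hasDerivAt.div_const 2) (hβ τ hτ).hasDerivAt.neg (hf' τ hτ ξ)]
    ring
  intro x t ht
  subst hL
  change reverseGenerator β f (reverseGenerator β f (fun x t => -f x t)) x t = _
  rw [reverseGenerator_eq_of_linComb_gaussScore (hν01 t ht).1 (hν01 t ht).2 (hν t ht)
    ((hI.eventually_mem ht).mono hLf)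
    ((((hβ t ht).hasDerivAt.pow 2).div_const 4).sub ((hβ' t ht).hasDerivAt.div_const 2))
    (hβ' t ht).hasDerivAt (hf' t ht x), hS' t ht x]
  have hne := (Real.sqrt_pos.mpr (hν01 t ht).1).ne'
  field_simp
  ring
end
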